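/- arXiv:1704.08132 — 2 statements merged into one kernel-verified Lean document; each statement's English description precedes it below -/
import Mathlib

section
/- Let A and B be fields contained in a common algebraically closed field Ω, and assume the field composite AB is a regular extension of A and of B. If E = A ∩ B, then the separable closure of E equals the intersection of the separable closures of A and B, i.e., E^s = A^s ∩ B^s. -/
namespace PacPaper
variable {Ω : Type} [Field Ω] [IsAlgClosed Ω]

/-- The separable closure of a subfield `K` inside `Ω`. -/
noncomputable def sepCl (K : Subfield Ω) : Subfield Ω := (separableClosure K Ω).toSubfield

/-- The (relative) algebraic closure of a subfield `K` inside `Ω`. -/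
noncomputable def algCl (K : Subfield Ω) : Subfield Ω := (algebraicClosure K Ω).toSubfield

/-- The perfect (purely inseparable) closure of a subfield `K` inside `Ω`. -/
noncomputable def pCl (K : Subfield Ω) : Subfield Ω := (perfectClosure K Ω).toSubfield

/-- `A` and `B` are linearly disjoint over a common subfield `E`:
every finite subset of `A` which is linearly independent over `E` remains
linearly independent over `B`. -/
def LinDisj (E A B : Subfield Ω) : Prop :=
  ∀ s : Finset Ω, ↑s ⊆ (A : Set Ω) →
    LinearIndependent E (Subtype.val : {x : Ω // x ∈ s} → Ω) →
    LinearIndependent B (Subtype.val : {x : Ω // x ∈ s} → Ω)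

/-- `A` and `B` are free over `E`: every finite subset of `A` which is
algebraically independent over `E` remains algebraically independent over `B`. -/
def FreeOver (E A B : Subfield Ω) : Prop :=
  ∀ s : Finset Ω, ↑s ⊆ (A : Set Ω) →
    AlgebraicIndependent E (Subtype.val : {x : Ω // x ∈ s} → Ω) →
    AlgebraicIndependent B (Subtype.val : {x : Ω // x ∈ s} → Ω)

/-- `L` is a regular extension of `K`: `K ≤ L` and `L` is linearly disjoint
over `K` from the algebraic closure of `K`. -/
def IsRegularExt (K L : Subfield Ω) : Prop := K ≤ L ∧ LinDisj K L (algCl K)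

/-- `L` is a separable extension of `K`: `K ≤ L` and `L` is linearly disjoint
over `K` from the perfect closure of `K`. -/
def IsSepExt (K L : Subfield Ω) : Prop := K ≤ L ∧ LinDisj K L (pCl K)

/-- `K` is separably closed (in `Ω`). -/
def IsSepClosedIn (K : Subfield Ω) : Prop := sepCl K = K

/-- The Galois group `Gal(X/Y)`: ring automorphisms of `X` fixing the
elements of `X` lying in `Y`. -/
def galGrp (Y X : Subfield Ω) : Subgroup (X ≃+* X) where
  carrier := {f | ∀ x : X, (x : Ω) ∈ Y → f x = x}
  one_mem' := by intro x _; rfl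
  mul_mem' := by
    intro f g hf hg x hx
    show f (g x) = x
    rw [hg x hx, hf x hx]
  inv_mem' := by
    intro f hf x hx
    show f.symm x = x
    conv_lhs => rw [← hf x hx]
    exact f.symm_apply_apply x

/-- `f` (an automorphism of `S`) and `g` (an automorphism of `T`) agree on the
elements of the subfield `U`. -/
def Agree {S T : Subfield Ω} (f : S ≃+* S) (g : T ≃+* T) (U : Subfield Ω) : Prop :=
  ∀ (x : Ω) (h₁ : x ∈ S) (h₂ : x ∈ T), x ∈ U →
    ((f ⟨x, h₁⟩ : Ω) = (g ⟨x, h₂⟩ : Ω))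

/-- `σ` (an automorphism of the larger field `X`) restricts to `τ` on the
subfield `S`. -/
def RestrictsTo {X S : Subfield Ω} (σ : X ≃+* X) (τ : S ≃+* S) : Prop :=
  Agree σ τ S

end PacPaper

/-! The minimal polynomial `q` of `x` over `AB` divides the minimal polynomials of `x` over `A`
and over `B`; hence `q` is separable and its coefficients are integral over `A` and over `B`.
Regularity of `AB/A` forces `AB ∩ Ã = A` for the algebraic closure `Ã` of `A` in `Ω` (for
`y ∈ AB ∩ Ã \ A` the pair `1, y` is `A`-independent but `Ã`-dependent), so the coefficients of
`q` lie in `A`, and likewise in `B`. Thus `x` is a root of a separable polynomial over `A ∩ B`. -/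

namespace PacPaper

variable {Ω : Type} [Field Ω]

theorem LinDisj.inf_le {K L M : Subfield Ω} (h : LinDisj K L M) : L ⊓ M ≤ K := by
  classical
  intro y hy
  obtain ⟨hyL, hyM⟩ := Subfield.mem_inf.mp hy
  by_contra hyK
  have hy1 : (1 : Ω) ≠ y := fun h1 => hyK (h1 ▸ K.one_mem)
  have hK : LinearIndepOn K id (({1, y} : Finset Ω) : Set Ω) := by
    rw [Finset.coe_pair, linearIndepOn_pair_iff id hy1 one_ne_zero]
    rintro c rfl
    exact hyK (by simp [Subfield.smul_def])
  have hM : LinearIndepOn M id (({1, y} : Finset Ω) : Set Ω) :=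
    h {1, y} (by simp [Set.insert_subset_iff, L.one_mem, hyL]) hK
  rw [Finset.coe_pair, linearIndepOn_pair_iff id hy1 one_ne_zero] at hM
  exact hM ⟨y, hyM⟩ (by simp [Subfield.smul_def])

theorem IsRegularExt.inf_algCl_le {K L : Subfield Ω} (h : IsRegularExt K L) :
    L ⊓ algCl K ≤ K :=
  h.2.inf_le

theorem mem_sepCl_iff {K : Subfield Ω} {x : Ω} : x ∈ sepCl K ↔ IsSeparable K x := by
  rw [sepCl, IntermediateField.mem_toSubfield, mem_separableClosure_iff]

theorem minpoly_dvd_map_inclusion {K L : Subfield Ω} (h : K ≤ L) (x : Ω) :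
    minpoly L x ∣ (minpoly K x).map (Subfield.inclusion h) := by
  let _ : Algebra K L := (Subfield.inclusion h).toAlgebra
  have : IsScalarTower K L Ω := IsScalarTower.of_algebraMap_eq fun _ => rfl
  exact minpoly.dvd_map_of_isScalarTower K L x

theorem isSeparable_of_le {K L : Subfield Ω} (h : K ≤ L) {x : Ω} (hx : IsSeparable K x) :
    IsSeparable L x :=
  ((Polynomial.separable_map _).mpr hx).of_dvd (minpoly_dvd_map_inclusion h x)

theorem sepCl_mono {K L : Subfield Ω} (h : K ≤ L) : sepCl K ≤ sepCl L :=
  fun _ hx => mem_sepCl_iff.mpr (isSeparable_of_le h (mem_sepCl_iff.mp hx))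

theorem coeff_minpoly_mem_algCl {K L : Subfield Ω} (h : K ≤ L) {x : Ω} (hx : IsIntegral K x)
    (n : ℕ) : ((minpoly L x).coeff n : Ω) ∈ algCl K := by
  let _ : Algebra K L := (Subfield.inclusion h).toAlgebra
  have : IsScalarTower K L Ω := IsScalarTower.of_algebraMap_eq fun _ => rfl
  have hcoeff : IsIntegral K ((minpoly L x).coeff n) :=
    Polynomial.isIntegral_coeff_of_dvd _ _ (minpoly.monic hx) (minpoly.monic hx.tower_top)
      (minpoly_dvd_map_inclusion h x) n
  rw [algCl, IntermediateField.mem_toSubfield, mem_algebraicClosure_iff]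
  exact (hcoeff.algebraMap (B := Ω)).isAlgebraic

theorem IsRegularExt.coeff_minpoly_mem {K L : Subfield Ω} (h : IsRegularExt K L) {x : Ω}
    (hx : IsIntegral K x) (n : ℕ) : ((minpoly L x).coeff n : Ω) ∈ K :=
  h.inf_algCl_le (Subfield.mem_inf.mpr ⟨((minpoly L x).coeff n).2,
    coeff_minpoly_mem_algCl h.1 hx n⟩)

end PacPaper

open Polynomial in
theorem isSeparable_of_separable_of_mem_lifts {F K : Type*} [Field F] [Field K] [Algebra F K]
    {P : K[X]} (hP : P.Separable) (hlifts : P ∈ lifts (algebraMap F K)) {x : K}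
    (hx : P.IsRoot x) : IsSeparable F x := by
  obtain ⟨r, rfl⟩ := (mem_lifts P).mp hlifts
  have hr : aeval x r = 0 := by rwa [aeval_def, ← eval_map]
  exact (separable_map _).mp (hP.of_dvd (Polynomial.map_dvd _ (minpoly.dvd F x hr)))

open PacPaper in
theorem sepClosure_inf_eq_inf_sepClosures_general
    (Ω : Type) [Field Ω] (A B : Subfield Ω)
    (hA : IsRegularExt A (A ⊔ B)) (hB : IsRegularExt B (A ⊔ B)) :
    sepCl (A ⊓ B) = sepCl A ⊓ sepCl B := by
  refine le_antisymm (le_inf (sepCl_mono inf_le_left) (sepCl_mono inf_le_right)) fun x hx => ?_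
  obtain ⟨hxA, hxB⟩ := Subfield.mem_inf.mp hx
  rw [mem_sepCl_iff] at hxA hxB ⊢
  set q := minpoly ↥(A ⊔ B) x
  have hcoeff (n : ℕ) : (q.coeff n : Ω) ∈ A ⊓ B := Subfield.mem_inf.mpr
    ⟨hA.coeff_minpoly_mem hxA.isIntegral n, hB.coeff_minpoly_mem hxB.isIntegral n⟩
  have hlifts : q.map (algebraMap _ Ω) ∈ Polynomial.lifts (algebraMap ↥(A ⊓ B) Ω) :=
    (Polynomial.lifts_iff_coeff_lifts _).mpr fun n =>
      ⟨⟨_, hcoeff n⟩, by rw [Polynomial.coeff_map]; rfl⟩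
  exact isSeparable_of_separable_of_mem_lifts
    (Polynomial.Separable.map (isSeparable_of_le hA.1 hxA)) hlifts (by simp [minpoly.aeval])

open PacPaper in
/-- Let `A`, `B` be subfields of an algebraically closed field `Ω`, and assume
the composite `AB` is a regular extension of `A` and of `B`.  If `E = A ∩ B`,
then `E^s = A^s ∩ B^s`. -/
theorem sepClosure_inf_eq_inf_sepClosures
    (Ω : Type) [Field Ω] [IsAlgClosed Ω] (A B : Subfield Ω)
    (hA : IsRegularExt A (A ⊔ B)) (hB : IsRegularExt B (A ⊔ B)) :
    sepCl (A ⊓ B) = sepCl A ⊓ sepCl B :=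
  sepClosure_inf_eq_inf_sepClosures_general Ω A B hA hB
end

section
/- Let L₁, L₂ be finite Galois extensions of K inside a separable closure, L₀ = L₁ ∩ L₂, and suppose a pair (a₁, a₂) is a 2-code both for (L₁, L₂, σ₁, σ₂, α₀, α₁, α₂) and for (L₁, L₂, τ₁, τ₂, β₀, β₁, β₂). Then there exists ρ ∈ Gal(L₁L₂/K) such that τ₁ = ρ|_{L₁} σ₁ ρ|_{L₁}⁻¹ and τ₂ = ρ|_{L₂} σ₂ ρ|_{L₂}⁻¹ (componentwise on the tuples σᵢ). -/
/-!
By equality of minimal polynomials there are `ρ₁, ρ₂ ∈ Gal(L₁L₂/K)` with `ρ₁ α₁ = β₁` and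
`ρ₂ α₂ = β₂`. As `α₀, β₀` are the same polynomial in `α₁, β₁` and in `α₂, β₂`, both send
`α₀` to `β₀`, so they agree on `L₀ = K(α₀)`. By the Galois correspondence the fixing group of
`L₁ ∩ L₂` is `Fix(L₁) ⊔ Fix(L₂) = Fix(L₁) · Fix(L₂)` (`Fix(L₁)` is normal), which yields one `ρ`
agreeing with `ρ₁` on `L₁` and with `ρ₂` on `L₂`. Finally `τᵢ ∘ ρ` and `ρ ∘ σᵢ` agree on the
generator `αᵢ` of `Lᵢ`, both sending it to `gᵢ(βᵢ)`.
-/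

open Polynomial IntermediateField

namespace IntermediateField

variable {F E B : Type*} [Field F] [Field E] [Algebra F E] [Semiring B] [Algebra F B]

theorem eqOn_adjoin {s : Set E} {φ ψ : E →ₐ[F] B} (h : Set.EqOn φ ψ s) :
    Set.EqOn φ ψ (adjoin F s) := fun x hx =>
  DFunLike.congr_fun (adjoin_algHom_ext F (φ₁ := φ.comp (val _)) (φ₂ := ψ.comp (val _))
    fun _ hy => h hy) ⟨x, hx⟩

end IntermediateField

namespace IsGalois

variable {F E : Type*} [Field F] [Field E] [Algebra F E] [FiniteDimensional F E] [IsGalois F E]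

theorem fixingSubgroup_inf (L₁ L₂ : IntermediateField F E) :
    (L₁ ⊓ L₂).fixingSubgroup = L₁.fixingSubgroup ⊔ L₂.fixingSubgroup :=
  congrArg OrderDual.ofDual (intermediateFieldEquivSubgroup.map_inf L₁ L₂)

theorem exists_eqOn_eqOn_of_eqOn_inf {L₁ L₂ : IntermediateField F E} [IsGalois F L₁]
    {σ₁ σ₂ : Gal(E/F)} (h : Set.EqOn σ₁ σ₂ (L₁ ⊓ L₂ : IntermediateField F E)) :
    ∃ σ : Gal(E/F), Set.EqOn σ σ₁ L₁ ∧ Set.EqOn σ σ₂ L₂ := by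
  have hmem : σ₁⁻¹ * σ₂ ∈ (L₁ ⊓ L₂).fixingSubgroup := by
    rw [IntermediateField.mem_fixingSubgroup_iff]
    intro x hx
    simp [AlgEquiv.mul_apply, ← h hx]
  rw [fixingSubgroup_inf, Subgroup.mem_sup_of_normal_left] at hmem
  obtain ⟨a, ha, b, hb, hab⟩ := hmem
  rw [IntermediateField.mem_fixingSubgroup_iff] at ha hb
  refine ⟨σ₁ * a, fun x hx => congrArg σ₁ (ha x hx), fun x hx => ?_⟩
  rw [inv_mul_eq_iff_eq_mul.mp hab.symm]
  simp [AlgEquiv.mul_apply, hb x hx]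

theorem exists_algEquiv_apply_eq_of_aeval_eq {L₁ L₂ : IntermediateField F E} [IsGalois F L₁]
    {α₁ α₂ β₁ β₂ : E} (hα₁ : α₁ ∈ L₁) (hα₂ : α₂ ∈ L₂) {p₁ p₂ : F[X]}
    (hα₀ : L₁ ⊓ L₂ ≤ adjoin F {aeval α₁ p₁}) (hα : aeval α₁ p₁ = aeval α₂ p₂)
    (hβ : aeval β₁ p₁ = aeval β₂ p₂)
    (hmin₁ : minpoly F α₁ = minpoly F β₁) (hmin₂ : minpoly F α₂ = minpoly F β₂) :
    ∃ ρ : Gal(E/F), ρ α₁ = β₁ ∧ ρ α₂ = β₂ := by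
  obtain ⟨σ₁, hσ₁ : σ₁ α₁ = β₁⟩ := (Normal.minpoly_eq_iff_mem_orbit E).mp hmin₁.symm
  obtain ⟨σ₂, hσ₂ : σ₂ α₂ = β₂⟩ := (Normal.minpoly_eq_iff_mem_orbit E).mp hmin₂.symm
  have hσ₀ : σ₁ (aeval α₁ p₁) = σ₂ (aeval α₁ p₁) := by
    rw [← aeval_algHom_apply, hσ₁, hβ, ← hσ₂, aeval_algHom_apply, hα]
  obtain ⟨ρ, hρ₁, hρ₂⟩ := exists_eqOn_eqOn_of_eqOn_inf
    ((eqOn_adjoin (φ := (σ₁ : E →ₐ[F] E)) (ψ := σ₂) (Set.eqOn_singleton.mpr hσ₀)).mono hα₀)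
  exact ⟨ρ, (hρ₁ hα₁).trans hσ₁, (hρ₂ hα₂).trans hσ₂⟩

end IsGalois

namespace AlgHom

variable {K M : Type*} [Field K] [Field M] [Algebra K M]

noncomputable def restrictNormalOfLE {L E : IntermediateField K M} [Normal K L]
    (ρ : E →ₐ[K] E) (h : L ≤ E) : L →ₐ[K] L :=
  (E.val.comp (ρ.comp (inclusion h))).codRestrict L.toSubalgebra fun x =>
    (fieldRange_of_normal (E.val.comp (ρ.comp (inclusion h)))).le ⟨x, rfl⟩

theorem comp_eq_comp_of_aeval_gen {L : IntermediateField K M} {α β : M} (hα : α ∈ L)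
    (hβ : β ∈ L) (hgen : adjoin K {α} = L) {φ σ τ : L →ₐ[K] L} (hφ : (φ ⟨α, hα⟩ : M) = β)
    (hcode : ∃ g : K[X], (σ ⟨α, hα⟩ : M) = aeval α g ∧ (τ ⟨β, hβ⟩ : M) = aeval β g) :
    τ.comp φ = φ.comp σ := by
  obtain ⟨g, hσ, hτ⟩ := hcode
  refine algHom_ext_of_eq_adjoin K hgen.symm ?_
  intro x hx
  subst x
  have hφ' : φ ⟨α, hα⟩ = ⟨β, hβ⟩ := Subtype.ext hφ
  have hσ' : σ ⟨α, hα⟩ = aeval ⟨α, hα⟩ g := Subtype.ext (hσ.trans (aeval_coe L ⟨α, hα⟩ g))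
  refine Subtype.ext ?_
  rw [comp_apply, comp_apply, hφ', hσ', ← aeval_algHom_apply, hφ', hτ]
  exact aeval_coe L ⟨β, hβ⟩ g

end AlgHom

namespace IntermediateField

variable {K M : Type*} [Field K] [Field M] [Algebra K M]

theorem exists_algEquiv_sup_apply_eq_of_aeval_eq {L₁ L₂ : IntermediateField K M}
    [FiniteDimensional K L₁] [FiniteDimensional K L₂] [IsGalois K L₁] [IsGalois K L₂]
    {α₀ α₁ α₂ β₀ β₁ β₂ : M} (hα₁ : α₁ ∈ L₁) (hβ₁ : β₁ ∈ L₁) (hα₂ : α₂ ∈ L₂) (hβ₂ : β₂ ∈ L₂)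
    (hα₀ : adjoin K {α₀} = L₁ ⊓ L₂)
    (hmin₁ : minpoly K α₁ = minpoly K β₁) (hmin₂ : minpoly K α₂ = minpoly K β₂)
    (hc₁ : ∃ h : K[X], α₀ = aeval α₁ h ∧ β₀ = aeval β₁ h)
    (hc₂ : ∃ h : K[X], α₀ = aeval α₂ h ∧ β₀ = aeval β₂ h) :
    ∃ ρ : ↥(L₁ ⊔ L₂) ≃ₐ[K] ↥(L₁ ⊔ L₂),
      (ρ ⟨α₁, le_sup_left (a := L₁) hα₁⟩ : M) = β₁ ∧
      (ρ ⟨α₂, le_sup_right (b := L₂) hα₂⟩ : M) = β₂ := by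
  have h₁ : L₁ ≤ L₁ ⊔ L₂ := le_sup_left
  have h₂ : L₂ ≤ L₁ ⊔ L₂ := le_sup_right
  have : IsGalois K (restrict h₁) := .of_algEquiv (restrictAlgEquiv h₁)
  obtain ⟨p₁, rfl, hβ₀⟩ := hc₁
  obtain ⟨p₂, hα, rfl⟩ := hc₂
  obtain ⟨ρ, hρ₁, hρ₂⟩ := IsGalois.exists_algEquiv_apply_eq_of_aeval_eq
    (α₁ := ⟨α₁, h₁ hα₁⟩) (α₂ := ⟨α₂, h₂ hα₂⟩) (β₁ := ⟨β₁, h₁ hβ₁⟩) (β₂ := ⟨β₂, h₂ hβ₂⟩)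
    (p₁ := p₁) (p₂ := p₂) ((mem_restrict h₁ _).mpr hα₁) ((mem_restrict h₂ _).mpr hα₂)
    (lift_injective _ (by
      rw [lift_inf, lift_restrict, lift_restrict, lift_adjoin_simple, ← aeval_coe, hα₀])).ge
    (by simpa only [Subtype.ext_iff, ← aeval_coe] using hα)
    (by simpa only [Subtype.ext_iff, ← aeval_coe] using hβ₀.symm)
    (by simpa only [minpoly_eq] using hmin₁) (by simpa only [minpoly_eq] using hmin₂)
  exact ⟨ρ, congrArg Subtype.val hρ₁, congrArg Subtype.val hρ₂⟩

end IntermediateField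

open Polynomial in
theorem two_code_determines_tuple_up_to_conjugation_general
    (K M : Type*) [Field K] [Field M] [Algebra K M]
    (L₁ L₂ : IntermediateField K M)
    [FiniteDimensional K L₁] [FiniteDimensional K L₂]
    [IsGalois K L₁] [IsGalois K L₂]
    (m₁ m₂ : ℕ)
    (σ₁ τ₁ : Fin m₁ → (L₁ ≃ₐ[K] L₁)) (σ₂ τ₂ : Fin m₂ → (L₂ ≃ₐ[K] L₂))
    (α₀ α₁ α₂ β₀ β₁ β₂ : M)
    (hα₁ : α₁ ∈ L₁) (hβ₁ : β₁ ∈ L₁) (hα₂ : α₂ ∈ L₂) (hβ₂ : β₂ ∈ L₂)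
    (hgenα₁ : IntermediateField.adjoin K {α₁} = L₁)
    (hgenα₂ : IntermediateField.adjoin K {α₂} = L₂)
    (hgenα₀ : IntermediateField.adjoin K {α₀} = L₁ ⊓ L₂)
    (hmin₁ : minpoly K α₁ = minpoly K β₁)
    (hmin₂ : minpoly K α₂ = minpoly K β₂)
    (hcode₁ : ∀ i, ∃ g : K[X],
      ((σ₁ i ⟨α₁, hα₁⟩ : L₁) : M) = aeval α₁ g ∧
      ((τ₁ i ⟨β₁, hβ₁⟩ : L₁) : M) = aeval β₁ g)
    (hcode₂ : ∀ i, ∃ g : K[X],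
      ((σ₂ i ⟨α₂, hα₂⟩ : L₂) : M) = aeval α₂ g ∧
      ((τ₂ i ⟨β₂, hβ₂⟩ : L₂) : M) = aeval β₂ g)
    (hc₀₁ : ∃ h : K[X], α₀ = aeval α₁ h ∧ β₀ = aeval β₁ h)
    (hc₀₂ : ∃ h : K[X], α₀ = aeval α₂ h ∧ β₀ = aeval β₂ h) :
    ∃ ρ : ↥(L₁ ⊔ L₂) ≃ₐ[K] ↥(L₁ ⊔ L₂),
      (∀ (x : M) (hx : x ∈ L₁),
        ((ρ ⟨x, (le_sup_left : L₁ ≤ L₁ ⊔ L₂) hx⟩ : ↥(L₁ ⊔ L₂)) : M) ∈ L₁) ∧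
      (∀ (x : M) (hx : x ∈ L₂),
        ((ρ ⟨x, (le_sup_right : L₂ ≤ L₁ ⊔ L₂) hx⟩ : ↥(L₁ ⊔ L₂)) : M) ∈ L₂) ∧
      (∀ (i : Fin m₁) (x : M) (hx : x ∈ L₁)
          (hρx : ((ρ ⟨x, (le_sup_left : L₁ ≤ L₁ ⊔ L₂) hx⟩ : ↥(L₁ ⊔ L₂)) : M) ∈ L₁),
        ((τ₁ i ⟨_, hρx⟩ : L₁) : M) =
          ((ρ ⟨((σ₁ i ⟨x, hx⟩ : L₁) : M),
              (le_sup_left : L₁ ≤ L₁ ⊔ L₂) (σ₁ i ⟨x, hx⟩).2⟩ : ↥(L₁ ⊔ L₂)) : M)) ∧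
      (∀ (i : Fin m₂) (x : M) (hx : x ∈ L₂)
          (hρx : ((ρ ⟨x, (le_sup_right : L₂ ≤ L₁ ⊔ L₂) hx⟩ : ↥(L₁ ⊔ L₂)) : M) ∈ L₂),
        ((τ₂ i ⟨_, hρx⟩ : L₂) : M) =
          ((ρ ⟨((σ₂ i ⟨x, hx⟩ : L₂) : M),
              (le_sup_right : L₂ ≤ L₁ ⊔ L₂) (σ₂ i ⟨x, hx⟩).2⟩ : ↥(L₁ ⊔ L₂)) : M)) := by
  obtain ⟨ρ, hρ₁, hρ₂⟩ := exists_algEquiv_sup_apply_eq_of_aeval_eq hα₁ hβ₁ hα₂ hβ₂ hgenα₀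
    hmin₁ hmin₂ hc₀₁ hc₀₂
  let φ₁ := (ρ : _ →ₐ[K] _).restrictNormalOfLE (le_sup_left : L₁ ≤ L₁ ⊔ L₂)
  let φ₂ := (ρ : _ →ₐ[K] _).restrictNormalOfLE (le_sup_right : L₂ ≤ L₁ ⊔ L₂)
  refine ⟨ρ, fun x hx => (φ₁ ⟨x, hx⟩).2, fun x hx => (φ₂ ⟨x, hx⟩).2,
    fun i x hx _ => ?_, fun i x hx _ => ?_⟩
  · exact congrArg Subtype.val <| DFunLike.congr_fun (AlgHom.comp_eq_comp_of_aeval_gen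
      (φ := φ₁) (σ := σ₁ i) (τ := τ₁ i) hα₁ hβ₁ hgenα₁ hρ₁ (hcode₁ i)) ⟨x, hx⟩
  · exact congrArg Subtype.val <| DFunLike.congr_fun (AlgHom.comp_eq_comp_of_aeval_gen
      (φ := φ₂) (σ := σ₂ i) (τ := τ₂ i) hα₂ hβ₂ hgenα₂ hρ₂ (hcode₂ i)) ⟨x, hx⟩

open Polynomial in
/-- Let `L₁`, `L₂` be finite Galois extensions of `K` (inside `M`),
`L₀ = L₁ ∩ L₂`, and suppose one and the same tuple is a 2-code both for
`(L₁, L₂, σ₁, σ₂, α₀, α₁, α₂)` and for `(L₁, L₂, τ₁, τ₂, β₀, β₁, β₂)`.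
Sharing the same code is expressed field-theoretically: `αᵢ` and `βᵢ` are
generators with the same minimal polynomial, each `σᵢ` and the corresponding
`τᵢ` act on `αᵢ`, `βᵢ` via the same polynomial over `K` (same coordinates in
the respective power bases), and `α₀`, `β₀` are the same polynomial expression
in `α₁, β₁` (resp. `α₂, β₂`) and generate `L₀`.  Then there exists
`ρ ∈ Gal(L₁L₂/K)` stabilising `L₁` and `L₂` such that
`τ₁ = ρ|_{L₁} σ₁ ρ|_{L₁}⁻¹` and `τ₂ = ρ|_{L₂} σ₂ ρ|_{L₂}⁻¹` (componentwise,
expressed by `τᵢ ∘ ρ = ρ ∘ σᵢ` on `Lᵢ`). -/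
theorem two_code_determines_tuple_up_to_conjugation
    (K M : Type*) [Field K] [Field M] [Algebra K M]
    (L₁ L₂ : IntermediateField K M)
    [FiniteDimensional K L₁] [FiniteDimensional K L₂]
    [IsGalois K L₁] [IsGalois K L₂]
    (m₁ m₂ : ℕ)
    (σ₁ τ₁ : Fin m₁ → (L₁ ≃ₐ[K] L₁)) (σ₂ τ₂ : Fin m₂ → (L₂ ≃ₐ[K] L₂))
    (α₀ α₁ α₂ β₀ β₁ β₂ : M)
    (hα₁ : α₁ ∈ L₁) (hβ₁ : β₁ ∈ L₁) (hα₂ : α₂ ∈ L₂) (hβ₂ : β₂ ∈ L₂)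
    (hgenα₁ : IntermediateField.adjoin K {α₁} = L₁)
    (hgenβ₁ : IntermediateField.adjoin K {β₁} = L₁)
    (hgenα₂ : IntermediateField.adjoin K {α₂} = L₂)
    (hgenβ₂ : IntermediateField.adjoin K {β₂} = L₂)
    (hgenα₀ : IntermediateField.adjoin K {α₀} = L₁ ⊓ L₂)
    (hgenβ₀ : IntermediateField.adjoin K {β₀} = L₁ ⊓ L₂)
    (hmin₁ : minpoly K α₁ = minpoly K β₁)
    (hmin₂ : minpoly K α₂ = minpoly K β₂)
    (hcode₁ : ∀ i, ∃ g : K[X],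
      ((σ₁ i ⟨α₁, hα₁⟩ : L₁) : M) = aeval α₁ g ∧
      ((τ₁ i ⟨β₁, hβ₁⟩ : L₁) : M) = aeval β₁ g)
    (hcode₂ : ∀ i, ∃ g : K[X],
      ((σ₂ i ⟨α₂, hα₂⟩ : L₂) : M) = aeval α₂ g ∧
      ((τ₂ i ⟨β₂, hβ₂⟩ : L₂) : M) = aeval β₂ g)
    (hc₀₁ : ∃ h : K[X], α₀ = aeval α₁ h ∧ β₀ = aeval β₁ h)
    (hc₀₂ : ∃ h : K[X], α₀ = aeval α₂ h ∧ β₀ = aeval β₂ h) :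
    ∃ ρ : ↥(L₁ ⊔ L₂) ≃ₐ[K] ↥(L₁ ⊔ L₂),
      (∀ (x : M) (hx : x ∈ L₁),
        ((ρ ⟨x, (le_sup_left : L₁ ≤ L₁ ⊔ L₂) hx⟩ : ↥(L₁ ⊔ L₂)) : M) ∈ L₁) ∧
      (∀ (x : M) (hx : x ∈ L₂),
        ((ρ ⟨x, (le_sup_right : L₂ ≤ L₁ ⊔ L₂) hx⟩ : ↥(L₁ ⊔ L₂)) : M) ∈ L₂) ∧
      (∀ (i : Fin m₁) (x : M) (hx : x ∈ L₁)
          (hρx : ((ρ ⟨x, (le_sup_left : L₁ ≤ L₁ ⊔ L₂) hx⟩ : ↥(L₁ ⊔ L₂)) : M) ∈ L₁),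
        ((τ₁ i ⟨_, hρx⟩ : L₁) : M) =
          ((ρ ⟨((σ₁ i ⟨x, hx⟩ : L₁) : M),
              (le_sup_left : L₁ ≤ L₁ ⊔ L₂) (σ₁ i ⟨x, hx⟩).2⟩ : ↥(L₁ ⊔ L₂)) : M)) ∧
      (∀ (i : Fin m₂) (x : M) (hx : x ∈ L₂)
          (hρx : ((ρ ⟨x, (le_sup_right : L₂ ≤ L₁ ⊔ L₂) hx⟩ : ↥(L₁ ⊔ L₂)) : M) ∈ L₂),
        ((τ₂ i ⟨_, hρx⟩ : L₂) : M) =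
          ((ρ ⟨((σ₂ i ⟨x, hx⟩ : L₂) : M),
              (le_sup_right : L₂ ≤ L₁ ⊔ L₂) (σ₂ i ⟨x, hx⟩).2⟩ : ↥(L₁ ⊔ L₂)) : M)) :=
  two_code_determines_tuple_up_to_conjugation_general K M L₁ L₂ m₁ m₂ σ₁ τ₁ σ₂ τ₂ α₀ α₁ α₂ β₀ β₁ β₂
    hα₁ hβ₁ hα₂ hβ₂ hgenα₁ hgenα₂ hgenα₀ hmin₁ hmin₂ hcode₁ hcode₂ hc₀₁ hc₀₂
end
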